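/- arXiv:1911.01416 — 3 statements merged into one kernel-verified Lean document; each statement's English description precedes it below -/
import Mathlib

section
/- For d ≥ 3 and any K ≥ 0, there is a constant C depending only on d such that for all t ≥ -K, ∫_{-K}^t min(1, (t-s)^{-d/2}) · min(1, (s+K)^{-(d/2-1)}) ds ≤ C · min(1, (t+K)^{-(d/2-1)}). -/
open MeasureTheory Real Set
open scoped Interval

/-!
Shift to `u = s + K ∈ (0, τ]` with `τ = t + K` and put `a = d/2 - 1 > 0`, so the kernel decays
with exponent `a + 1`. Split at `u = τ/2`. For `u ≤ τ/2` the kernel is at most its value at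
`τ/2`, and a constant integrated over length `τ` contributes `τ · min(1, (τ/2)^{-(a+1)})`, which
is at most `2 min(1, (τ/2)^{-a})` because `x min(1, x^{-(a+1)}) ≤ min(1, x^{-a})`. For `u > τ/2`
the second factor is at most `min(1, (τ/2)^{-a})`, while the kernel has total integral at most
`1 + 1/a`. Finally `min(1, (τ/2)^{-a}) ≤ 2^a min(1, τ^{-a})`.
-/

/-- For `q > 0` this vanishes at `x = 0` (as `0 ^ (-q) = 0`), so it is antitone only on `(0, ∞)`. -/
noncomputable def capDecay (q x : ℝ) : ℝ := min 1 (x ^ (-q))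

section capDecay

variable {q x y : ℝ}

@[fun_prop]
lemma measurable_capDecay : Measurable (capDecay q) := by
  unfold capDecay; fun_prop

lemma capDecay_nonneg (hx : 0 ≤ x) : 0 ≤ capDecay q x :=
  le_min zero_le_one (rpow_nonneg hx _)

lemma capDecay_le_one : capDecay q x ≤ 1 := min_le_left _ _

lemma norm_capDecay_le_one (hx : 0 ≤ x) : ‖capDecay q x‖ ≤ 1 := by
  rw [Real.norm_of_nonneg (capDecay_nonneg hx)]; exact capDecay_le_one

lemma capDecay_le_capDecay (hq : 0 ≤ q) (hx : 0 < x) (hxy : x ≤ y) :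
    capDecay q y ≤ capDecay q x :=
  min_le_min le_rfl (rpow_le_rpow_of_nonpos hx hxy (neg_nonpos.mpr hq))

lemma capDecay_half_le (hq : 0 ≤ q) (hx : 0 ≤ x) : capDecay q (x / 2) ≤ 2 ^ q * capDecay q x := by
  have h2 : (1 : ℝ) ≤ 2 ^ q := one_le_rpow one_le_two hq
  have hdiv : (x / 2) ^ (-q) = 2 ^ q * x ^ (-q) := by
    rw [div_rpow hx zero_le_two, rpow_neg zero_le_two, div_inv_eq_mul, mul_comm]
  rw [capDecay, capDecay, hdiv, mul_min_of_nonneg _ _ (zero_le_one.trans h2), mul_one]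
  exact min_le_min h2 le_rfl

lemma mul_capDecay_add_one_le (hq : 0 ≤ q) (hx : 0 ≤ x) :
    x * capDecay (q + 1) x ≤ capDecay q x := by
  rcases hx.eq_or_lt with rfl | hx
  · rw [zero_mul]; exact capDecay_nonneg le_rfl
  have hmul : x * x ^ (-(q + 1)) = x ^ (-q) := by
    rw [neg_add, rpow_add hx, rpow_neg_one, mul_left_comm, mul_inv_cancel₀ hx.ne', mul_one]
  rw [capDecay, mul_min_of_nonneg _ _ hx.le, mul_one, hmul]
  refine le_min ?_ (min_le_right _ _)
  rcases le_total x 1 with h | h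
  · exact (min_le_left _ _).trans h
  · exact (min_le_right _ _).trans (rpow_le_one_of_one_le_of_nonpos h (neg_nonpos.mpr hq))

end capDecay

lemma IntervalIntegrable.of_measurable_of_norm_le {f : ℝ → ℝ} {a b M : ℝ} (hf : Measurable f)
    (h : ∀ x ∈ Ι a b, ‖f x‖ ≤ M) : IntervalIntegrable f volume a b :=
  intervalIntegrable_iff.mpr <| Measure.integrableOn_of_bounded measure_Ioc_lt_top.ne
    hf.aestronglyMeasurable ((ae_restrict_iff' measurableSet_uIoc).mpr (ae_of_all _ h))

lemma intervalIntegrable_capDecay (q : ℝ) {a b : ℝ} (ha : 0 ≤ a) (hb : 0 ≤ b) :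
    IntervalIntegrable (capDecay q) volume a b :=
  .of_measurable_of_norm_le measurable_capDecay fun _ hx =>
    norm_capDecay_le_one ((le_min ha hb).trans (uIoc_subset_uIcc hx).1)

lemma integral_capDecay_add_one_le {a τ : ℝ} (ha : 0 < a) (hτ : 0 ≤ τ) :
    ∫ x in 0..τ, capDecay (a + 1) x ≤ 1 + a⁻¹ := by
  set M := max τ 1
  have hM : 1 ≤ M := le_max_right τ 1
  have h0M : (0 : ℝ) ∉ [[1, M]] := by rw [uIcc_of_le hM]; exact fun h => by linarith [h.1]
  have head : ∫ x in 0..1, capDecay (a + 1) x ≤ 1 := by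
    simpa using intervalIntegral.integral_mono_on zero_le_one
      (intervalIntegrable_capDecay _ le_rfl zero_le_one) intervalIntegrable_const
      fun _ _ => capDecay_le_one
  have tail : ∫ x in 1..M, capDecay (a + 1) x ≤ a⁻¹ := by
    calc ∫ x in 1..M, capDecay (a + 1) x
        ≤ ∫ x in 1..M, x ^ (-(a + 1)) :=
          intervalIntegral.integral_mono_on hM
            (intervalIntegrable_capDecay _ zero_le_one (by linarith))
            (intervalIntegral.intervalIntegrable_rpow (Or.inr h0M)) fun _ _ => min_le_right _ _
      _ = (1 - M ^ (-a)) / a := by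
          rw [integral_rpow (Or.inr ⟨by linarith, h0M⟩), show -(a + 1) + 1 = -a by ring, one_rpow,
            div_neg, neg_div', neg_sub]
      _ ≤ a⁻¹ := by
          rw [div_eq_mul_inv]
          exact mul_le_of_le_one_left (inv_nonneg.mpr ha.le)
            (by linarith [rpow_nonneg (zero_le_one.trans hM) (-a)])
  calc ∫ x in 0..τ, capDecay (a + 1) x
      ≤ ∫ x in 0..M, capDecay (a + 1) x :=
        intervalIntegral.integral_mono_interval le_rfl hτ (le_max_left τ 1)
          (ae_restrict_of_forall_mem measurableSet_Ioc fun x hx => capDecay_nonneg hx.1.le)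
          (intervalIntegrable_capDecay _ le_rfl (by linarith))
    _ = (∫ x in 0..1, capDecay (a + 1) x) + ∫ x in 1..M, capDecay (a + 1) x :=
        (intervalIntegral.integral_add_adjacent_intervals
          (intervalIntegrable_capDecay _ le_rfl zero_le_one)
          (intervalIntegrable_capDecay _ zero_le_one (by linarith))).symm
    _ ≤ 1 + a⁻¹ := add_le_add head tail

lemma capDecay_mul_le {a τ u : ℝ} (ha : 0 < a) (hu : u ∈ Ioo 0 τ) :
    capDecay (a + 1) (τ - u) * capDecay a u ≤
      capDecay (a + 1) (τ / 2) + capDecay a (τ / 2) * capDecay (a + 1) (τ - u) := by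
  obtain ⟨hu0, huτ⟩ := hu
  have hτ2 : 0 < τ / 2 := by linarith
  have hfar := capDecay_nonneg (q := a + 1) (sub_pos.mpr huτ).le
  rcases le_or_gt u (τ / 2) with h | h
  · have : capDecay (a + 1) (τ - u) * capDecay a u ≤ capDecay (a + 1) (τ / 2) :=
      (mul_le_of_le_one_right hfar capDecay_le_one).trans
        (capDecay_le_capDecay (by linarith) hτ2 (by linarith))
    linarith [mul_nonneg (capDecay_nonneg (q := a) hτ2.le) hfar]
  · have : capDecay (a + 1) (τ - u) * capDecay a u ≤
        capDecay a (τ / 2) * capDecay (a + 1) (τ - u) := by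
      rw [mul_comm]
      exact mul_le_mul_of_nonneg_right (capDecay_le_capDecay ha.le hτ2 h.le) hfar
    linarith [capDecay_nonneg (q := a + 1) hτ2.le]

lemma integral_capDecay_mul_capDecay_le {a τ : ℝ} (ha : 0 < a) (hτ : 0 ≤ τ) :
    ∫ u in 0..τ, capDecay (a + 1) (τ - u) * capDecay a u ≤ (3 + a⁻¹) * 2 ^ a * capDecay a τ := by
  rcases hτ.eq_or_lt with rfl | hτ
  · simpa using mul_nonneg (by positivity) (capDecay_nonneg le_rfl)
  have hbound : ∀ u ∈ Ι 0 τ, ‖capDecay (a + 1) (τ - u)‖ ≤ 1 ∧ ‖capDecay a u‖ ≤ 1 := fun u hu => by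
    rw [uIoc_of_le hτ.le] at hu
    exact ⟨norm_capDecay_le_one (sub_nonneg.mpr hu.2), norm_capDecay_le_one hu.1.le⟩
  have hfar : IntervalIntegrable (fun u => capDecay (a + 1) (τ - u)) volume 0 τ :=
    .of_measurable_of_norm_le (by fun_prop) fun u hu => (hbound u hu).1
  have hprod : IntervalIntegrable (fun u => capDecay (a + 1) (τ - u) * capDecay a u) volume 0 τ :=
    .of_measurable_of_norm_le (by fun_prop) fun u hu => by
      rw [norm_mul]
      exact mul_le_one₀ (hbound u hu).1 (norm_nonneg _) (hbound u hu).2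
  have hreflect : ∫ u in 0..τ, capDecay (a + 1) (τ - u) = ∫ u in 0..τ, capDecay (a + 1) u := by
    simp only [intervalIntegral.integral_comp_sub_left, sub_self, sub_zero]
  have hhalf : τ * capDecay (a + 1) (τ / 2) ≤ 2 * capDecay a (τ / 2) := by
    linarith [mul_capDecay_add_one_le (q := a) ha.le (by linarith : 0 ≤ τ / 2)]
  calc ∫ u in 0..τ, capDecay (a + 1) (τ - u) * capDecay a u
      ≤ ∫ u in 0..τ, (capDecay (a + 1) (τ / 2) + capDecay a (τ / 2) * capDecay (a + 1) (τ - u)) :=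
        intervalIntegral.integral_mono_on_of_le_Ioo hτ.le hprod
          (intervalIntegrable_const.add (hfar.const_mul _)) fun u hu => capDecay_mul_le ha hu
    _ = τ * capDecay (a + 1) (τ / 2) + capDecay a (τ / 2) * ∫ u in 0..τ, capDecay (a + 1) u := by
        rw [intervalIntegral.integral_add intervalIntegrable_const (hfar.const_mul _),
          intervalIntegral.integral_const, intervalIntegral.integral_const_mul, hreflect,
          sub_zero, smul_eq_mul]
    _ ≤ 2 * capDecay a (τ / 2) + capDecay a (τ / 2) * (1 + a⁻¹) := by
        gcongr
        · exact capDecay_nonneg (by linarith)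
        · exact integral_capDecay_add_one_le ha hτ.le
    _ = (3 + a⁻¹) * capDecay a (τ / 2) := by ring
    _ ≤ (3 + a⁻¹) * (2 ^ a * capDecay a τ) := by
        gcongr
        exact capDecay_half_le ha.le hτ.le
    _ = (3 + a⁻¹) * 2 ^ a * capDecay a τ := by ring

theorem stmt2 (d : ℕ) (hd : 3 ≤ d) :
    ∃ C > 0, ∀ K t : ℝ, 0 ≤ K → -K ≤ t →
      (∫ s in Set.Ioc (-K) t,
          min 1 ((t - s) ^ (-(d : ℝ) / 2)) * min 1 ((s + K) ^ (-((d : ℝ) / 2 - 1))))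
        ≤ C * min 1 ((t + K) ^ (-((d : ℝ) / 2 - 1))) := by
  set a : ℝ := (d : ℝ) / 2 - 1 with ha_def
  have ha : 0 < a := by
    have : (3 : ℝ) ≤ d := by exact_mod_cast hd
    rw [ha_def]; linarith
  refine ⟨(3 + a⁻¹) * 2 ^ a, by positivity, fun K t _ ht => ?_⟩
  have hshift := intervalIntegral.integral_comp_add_right (a := -K) (b := t)
    (fun u => capDecay (a + 1) (t + K - u) * capDecay a u) K
  rw [neg_add_cancel] at hshift
  have hexp : -(d : ℝ) / 2 = -(a + 1) := by ring
  have key := integral_capDecay_mul_capDecay_le ha (τ := t + K) (by linarith)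
  rw [← hshift] at key
  rw [← intervalIntegral.integral_of_le ht, hexp]
  simpa only [capDecay, add_sub_add_right_eq_sub] using key
end

section
/- Let d ≥ 1 and let p(t,x) be the heat kernel on ℝ^d. For any δ ∈ (0,1) there exists a constant C > 0 such that for all t > 0, y, x₁, x₂ ∈ ℝ^d: |p(t, x₁ - y) - p(t, x₂ - y)| ≤ C t^{-δ/2} (p(2t, x₁ - y) + p(2t, x₂ - y)) |x₁ - x₂|^δ. -/
/-! Since `p(t, x) = 2^{d/2} (8πt)^{-d/2} e^{-|x|²/4t}` and `e^{-|x|²/4t} ≤ e^{-|x|²/8t}`, we have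
`p(t, ·) ≤ 2^{d/2} p(2t, ·)`, which settles the case `|x₁ - x₂| ≥ √t`. When `|x₁ - x₂| ≤ √t`,
the bound `|e^{-A} - e^{-B}| ≤ |A - B| (e^{-A} + e^{-B})` and `r e^{-r²/8t} ≤ 2√t` give the
Lipschitz estimate with factor `u = |x₁ - x₂| / √t ≤ 1`, and `u ≤ u^δ`. -/

open MeasureTheory Real Set

noncomputable def heatKernel (d : ℕ) (t : ℝ) (x : EuclideanSpace ℝ (Fin d)) : ℝ :=
  (4 * Real.pi * t) ^ (-(d : ℝ) / 2) * Real.exp (-‖x‖ ^ 2 / (4 * t))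

lemma abs_exp_neg_sub_exp_neg_le (A B : ℝ) :
    |exp (-A) - exp (-B)| ≤ |A - B| * (exp (-A) + exp (-B)) := by
  wlog h : A ≤ B generalizing A B
  · rw [abs_sub_comm, abs_sub_comm A B, add_comm]
    exact this B A (le_of_not_ge h)
  have h_exp : exp (-B) = exp (-A) * exp (A - B) := by rw [← exp_add]; ring_nf
  rw [abs_of_nonneg (sub_nonneg.2 (exp_le_exp.2 (neg_le_neg h))), abs_of_nonpos (by linarith)]
  nlinarith [mul_le_mul_of_nonneg_left (add_one_le_exp (A - B)) (exp_pos (-A)).le,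
    exp_pos (-B)]

lemma mul_exp_neg_sq_div_le {t : ℝ} (ht : 0 < t) (r : ℝ) :
    r * exp (-(r ^ 2 / (8 * t))) ≤ 2 * √t := by
  have hσ : 0 < √t := sqrt_pos.2 ht
  rw [exp_neg, ← div_eq_mul_inv, div_le_iff₀ (exp_pos _)]
  calc r ≤ 2 * √t * (r ^ 2 / (8 * t) + 1) := by
        rw [div_add_one (by positivity), mul_div_assoc', le_div_iff₀ (by positivity)]
        nlinarith [mul_nonneg hσ.le (sq_nonneg (r - 2 * √t)), mul_self_sqrt ht.le]
    _ ≤ 2 * √t * exp (r ^ 2 / (8 * t)) := by gcongr; exact add_one_le_exp _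

lemma two_mul_add_sqrt_mul_exp_le {t : ℝ} (ht : 0 < t) (r : ℝ) :
    (2 * r + √t) * exp (-(r ^ 2 / (4 * t))) ≤ 5 * √t * exp (-(r ^ 2 / (8 * t))) := by
  have h_mul := mul_exp_neg_sq_div_le ht r
  set e := exp (-(r ^ 2 / (8 * t)))
  have h_sq : exp (-(r ^ 2 / (4 * t))) = e * e := by
    rw [← exp_add]; congr 1; field_simp; ring
  have he_pos : 0 < e := exp_pos _
  have he_le_one : e ≤ 1 := exp_le_one_iff.2 (neg_nonpos.2 (by positivity))
  rw [h_sq]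
  nlinarith [mul_le_mul_of_nonneg_right h_mul he_pos.le,
    mul_le_mul_of_nonneg_left he_le_one (mul_nonneg (sqrt_nonneg t) he_pos.le)]

lemma abs_exp_neg_sq_div_sub_le {t a b s : ℝ} (ht : 0 < t) (ha : 0 ≤ a) (hb : 0 ≤ b)
    (hab : |a - b| ≤ s) (hs : s ≤ √t) :
    |exp (-(a ^ 2 / (4 * t))) - exp (-(b ^ 2 / (4 * t)))| ≤
      5 / 4 * (s / √t) * (exp (-(a ^ 2 / (8 * t))) + exp (-(b ^ 2 / (8 * t)))) := by
  have h_sum_a : a + b ≤ 2 * a + √t := by linarith [(abs_sub_le_iff.1 hab).2]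
  have h_sum_b : a + b ≤ 2 * b + √t := by linarith [(abs_sub_le_iff.1 hab).1]
  have hs₀ : 0 ≤ s := (abs_nonneg _).trans hab
  calc _ ≤ |a ^ 2 / (4 * t) - b ^ 2 / (4 * t)| *
          (exp (-(a ^ 2 / (4 * t))) + exp (-(b ^ 2 / (4 * t)))) :=
        abs_exp_neg_sub_exp_neg_le _ _
    _ = |a - b| / (4 * t) *
          ((a + b) * exp (-(a ^ 2 / (4 * t))) + (a + b) * exp (-(b ^ 2 / (4 * t)))) := by
        rw [div_sub_div_same, ← sq_abs a, ← sq_abs b, sq_sub_sq, abs_div, abs_mul,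
          abs_of_pos (by positivity : 0 < 4 * t), abs_of_nonneg (by positivity : 0 ≤ |a| + |b|),
          abs_of_nonneg ha, abs_of_nonneg hb]
        ring
    _ ≤ s / (4 * t) *
          ((2 * a + √t) * exp (-(a ^ 2 / (4 * t))) + (2 * b + √t) * exp (-(b ^ 2 / (4 * t)))) := by
        gcongr
    _ ≤ s / (4 * t) *
          (5 * √t * exp (-(a ^ 2 / (8 * t))) + 5 * √t * exp (-(b ^ 2 / (8 * t)))) := by
        gcongr ?_ * (?_ + ?_) <;> exact two_mul_add_sqrt_mul_exp_le ht _
    _ = _ := by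
        field_simp
        rw [sq_sqrt ht.le]

section

variable {d : ℕ} {t : ℝ}

lemma heatKernel_eq_two_rpow_mul (ht : 0 < t) (x : EuclideanSpace ℝ (Fin d)) :
    heatKernel d t x =
      2 ^ ((d : ℝ) / 2) * ((4 * π * (2 * t)) ^ (-(d : ℝ) / 2) * exp (-(‖x‖ ^ 2 / (4 * t)))) := by
  rw [heatKernel, neg_div (4 * t), ← mul_assoc, show 4 * π * (2 * t) = 2 * (4 * π * t) by ring,
    mul_rpow zero_le_two (by positivity), ← mul_assoc, ← rpow_add zero_lt_two, neg_div,
    add_neg_cancel, rpow_zero, one_mul]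

lemma heatKernel_two_mul (x : EuclideanSpace ℝ (Fin d)) :
    heatKernel d (2 * t) x = (4 * π * (2 * t)) ^ (-(d : ℝ) / 2) * exp (-(‖x‖ ^ 2 / (8 * t))) := by
  rw [heatKernel, neg_div (4 * (2 * t)), show 4 * (2 * t) = 8 * t by ring]

lemma heatKernel_nonneg (ht : 0 ≤ t) (x : EuclideanSpace ℝ (Fin d)) : 0 ≤ heatKernel d t x := by
  unfold heatKernel; positivity

lemma heatKernel_le_two_rpow_mul (ht : 0 < t) (x : EuclideanSpace ℝ (Fin d)) :
    heatKernel d t x ≤ 2 ^ ((d : ℝ) / 2) * heatKernel d (2 * t) x := by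
  rw [heatKernel_eq_two_rpow_mul ht, heatKernel_two_mul]
  gcongr
  norm_num

lemma abs_heatKernel_sub_le_two_rpow_mul (ht : 0 < t) (x₁ x₂ : EuclideanSpace ℝ (Fin d)) :
    |heatKernel d t x₁ - heatKernel d t x₂| ≤
      2 ^ ((d : ℝ) / 2) * (heatKernel d (2 * t) x₁ + heatKernel d (2 * t) x₂) := by
  have h₁ := heatKernel_nonneg (d := d) (by positivity : 0 ≤ 2 * t) x₁
  have h₂ := heatKernel_nonneg (d := d) (by positivity : 0 ≤ 2 * t) x₂
  refine abs_sub_le_of_nonneg_of_le (heatKernel_nonneg ht.le _) ?_ (heatKernel_nonneg ht.le _) ?_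
  · exact (heatKernel_le_two_rpow_mul ht x₁).trans (by gcongr; linarith)
  · exact (heatKernel_le_two_rpow_mul ht x₂).trans (by gcongr; linarith)

lemma abs_heatKernel_sub_le_of_norm_sub_le (ht : 0 < t) {x₁ x₂ : EuclideanSpace ℝ (Fin d)}
    (hx : ‖x₁ - x₂‖ ≤ √t) :
    |heatKernel d t x₁ - heatKernel d t x₂| ≤
      5 / 4 * 2 ^ ((d : ℝ) / 2) * (‖x₁ - x₂‖ / √t) *
        (heatKernel d (2 * t) x₁ + heatKernel d (2 * t) x₂) := by
  simp only [heatKernel_eq_two_rpow_mul ht, heatKernel_two_mul]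
  set K := (4 * π * (2 * t)) ^ (-(d : ℝ) / 2)
  have hK : 0 < K := by positivity
  calc _ = 2 ^ ((d : ℝ) / 2) * K *
        |exp (-(‖x₁‖ ^ 2 / (4 * t))) - exp (-(‖x₂‖ ^ 2 / (4 * t)))| := by
        rw [← mul_sub, ← mul_sub, abs_mul, abs_mul, abs_of_pos hK,
          abs_of_pos (by positivity : (0 : ℝ) < 2 ^ ((d : ℝ) / 2)), mul_assoc]
    _ ≤ 2 ^ ((d : ℝ) / 2) * K * (5 / 4 * (‖x₁ - x₂‖ / √t) *
        (exp (-(‖x₁‖ ^ 2 / (8 * t))) + exp (-(‖x₂‖ ^ 2 / (8 * t))))) := by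
        gcongr
        exact abs_exp_neg_sq_div_sub_le ht (norm_nonneg _) (norm_nonneg _)
          (abs_norm_sub_norm_le x₁ x₂) hx
    _ = _ := by ring

lemma rpow_neg_half_mul_rpow_eq_div_sqrt_rpow (ht : 0 < t) {s : ℝ} (hs : 0 ≤ s) (δ : ℝ) :
    t ^ (-δ / 2) * s ^ δ = (s / √t) ^ δ := by
  rw [div_rpow hs (sqrt_nonneg t), sqrt_eq_rpow, ← rpow_mul ht.le, neg_div, rpow_neg ht.le]
  ring_nf

lemma abs_heatKernel_sub_le {δ : ℝ} (hδ₀ : 0 ≤ δ) (hδ₁ : δ ≤ 1) (ht : 0 < t)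
    (x₁ x₂ : EuclideanSpace ℝ (Fin d)) :
    |heatKernel d t x₁ - heatKernel d t x₂| ≤
      2 * 2 ^ ((d : ℝ) / 2) * t ^ (-δ / 2) *
        (heatKernel d (2 * t) x₁ + heatKernel d (2 * t) x₂) * ‖x₁ - x₂‖ ^ δ := by
  set u := ‖x₁ - x₂‖ / √t
  set P := heatKernel d (2 * t) x₁ + heatKernel d (2 * t) x₂
  have hu : 0 ≤ u := by positivity
  have hP : 0 ≤ P := add_nonneg (heatKernel_nonneg (by positivity) _)
    (heatKernel_nonneg (by positivity) _)
  rw [mul_right_comm _ _ P, mul_assoc _ _ (‖x₁ - x₂‖ ^ δ),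
    rpow_neg_half_mul_rpow_eq_div_sqrt_rpow ht (norm_nonneg _)]
  rcases le_total ‖x₁ - x₂‖ √t with hx | hx
  · have hu_le : u ≤ u ^ δ :=
      self_le_rpow_of_le_one hu (div_le_one_of_le₀ hx (sqrt_nonneg t)) hδ₁
    calc _ ≤ 5 / 4 * 2 ^ ((d : ℝ) / 2) * u * P := abs_heatKernel_sub_le_of_norm_sub_le ht hx
      _ ≤ 2 * 2 ^ ((d : ℝ) / 2) * P * u ^ δ := by
        rw [mul_right_comm _ u P]
        gcongr
        norm_num
  · have hu_ge : 1 ≤ u ^ δ := one_le_rpow ((one_le_div (sqrt_pos.2 ht)).2 hx) hδ₀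
    have hEP : 0 ≤ 2 ^ ((d : ℝ) / 2) * P := by positivity
    calc _ ≤ 2 ^ ((d : ℝ) / 2) * P := abs_heatKernel_sub_le_two_rpow_mul ht x₁ x₂
      _ ≤ 2 * 2 ^ ((d : ℝ) / 2) * P := by linarith
      _ ≤ 2 * 2 ^ ((d : ℝ) / 2) * P * u ^ δ := le_mul_of_one_le_right (by positivity) hu_ge

end

theorem stmt5_general (d : ℕ) (δ : ℝ) (hδ : δ ∈ Set.Ioo (0 : ℝ) 1) :
    ∃ C > 0, ∀ t : ℝ, 0 < t → ∀ y x₁ x₂ : EuclideanSpace ℝ (Fin d),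
      |heatKernel d t (x₁ - y) - heatKernel d t (x₂ - y)| ≤
        C * t ^ (-δ / 2) *
          (heatKernel d (2 * t) (x₁ - y) + heatKernel d (2 * t) (x₂ - y)) *
          ‖x₁ - x₂‖ ^ δ := by
  refine ⟨2 * 2 ^ ((d : ℝ) / 2), by positivity, fun t ht y x₁ x₂ => ?_⟩
  simpa only [sub_sub_sub_cancel_right] using
    abs_heatKernel_sub_le hδ.1.le hδ.2.le ht (x₁ - y) (x₂ - y)

theorem stmt5 (d : ℕ) (hd : 1 ≤ d) (δ : ℝ) (hδ : δ ∈ Set.Ioo (0 : ℝ) 1) :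
    ∃ C > 0, ∀ t : ℝ, 0 < t → ∀ y x₁ x₂ : EuclideanSpace ℝ (Fin d),
      |heatKernel d t (x₁ - y) - heatKernel d t (x₂ - y)| ≤
        C * t ^ (-δ / 2) *
          (heatKernel d (2 * t) (x₁ - y) + heatKernel d (2 * t) (x₂ - y)) *
          ‖x₁ - x₂‖ ^ δ :=
  stmt5_general d δ hδ
end

section
/- Let d ≥ 3 and k(s) = min(1, s^{-d/2}) for s > 0. For K ≥ 0, t > -K, and n ≥ 1, define the iterated integral I_n(t) = ∫_{-K < s_n < ... < s_1 < t} (∏_{j=0}^{n-1} k(s_j - s_{j+1})) · min(1, (s_n + K)^{-(d/2-1)}) ds_n ... ds_1 (with s₀ = t). Then there exists a constant C > 0 depending only on d such that I_n(t) ≤ C^n · min(1, (t+K)^{-(d/2-1)}) for all n, t, K. -/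
/-!
Write `b = d/2 - 1 > 0`, so the kernel is `min 1 (x ^ (-(b + 1)))` and the source term is
`min 1 (x ^ (-b))`. For a single convolution, split `(-K, t]` at its midpoint. On the lower half
the kernel is at most its value at `(t + K)/2`, over an interval of length `(t + K)/2`; on the
upper half the source term is at most its value at `(t + K)/2`, while the kernel has total mass
at most `1 + 1/b` because `b + 1 > 1`. Halving the argument costs a factor `2 ^ b`, so one
convolution multiplies the bound by `C = 2 ^ b * (2 + 1/b)`. All iterates are nonnegative, so the
bound passes under the integral and induction on `n` gives `C ^ n`.
-/

open MeasureTheory Real Set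

noncomputable def truncRpow (a x : ℝ) : ℝ := min 1 (x ^ (-a))

section TruncRpow

variable {a b x y : ℝ}

lemma truncRpow_nonneg (a : ℝ) (hx : 0 ≤ x) : 0 ≤ truncRpow a x :=
  le_min zero_le_one (rpow_nonneg hx _)

lemma truncRpow_le_one (a x : ℝ) : truncRpow a x ≤ 1 := min_le_left _ _

@[fun_prop]
lemma measurable_truncRpow (a : ℝ) : Measurable (truncRpow a) :=
  measurable_const.min (measurable_id.pow_const _)

lemma truncRpow_le_truncRpow_of_le (ha : 0 ≤ a) (hx : 0 < x) (hxy : x ≤ y) :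
    truncRpow a y ≤ truncRpow a x :=
  min_le_min_left _ (rpow_le_rpow_of_nonpos hx hxy (neg_nonpos.2 ha))

lemma truncRpow_half_le (hb : 0 ≤ b) (hx : 0 ≤ x) :
    truncRpow b (x / 2) ≤ 2 ^ b * truncRpow b x := by
  have h2 : (1 : ℝ) ≤ 2 ^ b := one_le_rpow one_le_two hb
  have hhalf : (x / 2) ^ (-b) = 2 ^ b * x ^ (-b) := by
    rw [div_rpow hx zero_le_two, rpow_neg zero_le_two, div_inv_eq_mul, mul_comm]
  rw [truncRpow, truncRpow, hhalf, mul_min_of_nonneg _ _ (by positivity), mul_one]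
  exact min_le_min_right _ h2

lemma mul_truncRpow_add_one_le (hb : 0 ≤ b) (hx : 0 < x) :
    x * truncRpow (b + 1) x ≤ truncRpow b x := by
  have hpow : x * x ^ (-(b + 1)) = x ^ (-b) := by
    rw [neg_add, rpow_add hx, rpow_neg_one, mul_left_comm, mul_inv_cancel₀ hx.ne', mul_one]
  have hle : x * truncRpow (b + 1) x ≤ x ^ (-b) :=
    hpow ▸ mul_le_mul_of_nonneg_left (min_le_right _ _) hx.le
  refine le_min ?_ hle
  rcases le_total x 1 with h1 | h1
  · exact (mul_le_of_le_one_right hx.le (truncRpow_le_one _ _)).trans h1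
  · exact hle.trans (rpow_le_one_of_one_le_of_nonpos h1 (neg_nonpos.2 hb))

end TruncRpow

lemma integrableOn_Ioc_of_abs_le {f : ℝ → ℝ} {a b M : ℝ} (hf : Measurable f)
    (hM : ∀ x ∈ Ioc a b, |f x| ≤ M) : IntegrableOn f (Ioc a b) :=
  Measure.integrableOn_of_bounded measure_Ioc_lt_top.ne hf.aestronglyMeasurable
    ((ae_restrict_iff' measurableSet_Ioc).2 (ae_of_all _ hM))

lemma setIntegral_Ioc_le_of_le {f : ℝ → ℝ} {a b M : ℝ}
    (hM : ∀ x ∈ Ioc a b, 0 ≤ f x ∧ f x ≤ M) :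
    ∫ x in Ioc a b, f x ≤ M * volume.real (Ioc a b) :=
  (le_abs_self _).trans <| norm_setIntegral_le_of_norm_le_const measure_Ioc_lt_top fun x hx => by
    rw [Real.norm_eq_abs, abs_of_nonneg (hM x hx).1]; exact (hM x hx).2

lemma integrableOn_truncRpow_sub_mul (a b t K : ℝ) :
    IntegrableOn (fun s => truncRpow a (t - s) * truncRpow b (s + K)) (Ioc (-K) t) :=
  integrableOn_Ioc_of_abs_le (M := 1) (by fun_prop) fun s hs => by
    have h₁ := truncRpow_nonneg a (sub_nonneg.2 hs.2)
    have h₂ := truncRpow_nonneg b (neg_le_iff_add_nonneg.1 hs.1.le)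
    rw [abs_of_nonneg (mul_nonneg h₁ h₂)]
    exact mul_le_one₀ (truncRpow_le_one _ _) h₂ (truncRpow_le_one _ _)

lemma setIntegral_truncRpow_add_one_le {b : ℝ} (hb : 0 < b) (T : ℝ) :
    ∫ v in Ioc 0 T, truncRpow (b + 1) v ≤ 1 + 1 / b := by
  have hexp : -(b + 1) < -1 := by linarith
  have hint₁ : IntegrableOn (truncRpow (b + 1)) (Ioc 0 1) :=
    integrableOn_Ioc_of_abs_le (M := 1) (by fun_prop) fun v hv => by
      rw [abs_of_nonneg (truncRpow_nonneg _ hv.1.le)]; exact truncRpow_le_one _ _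
  have hint₂ : IntegrableOn (truncRpow (b + 1)) (Ioi 1) := by
    refine (integrableOn_Ioi_rpow_of_lt hexp zero_lt_one).mono' (by fun_prop) ?_
    refine (ae_restrict_iff' measurableSet_Ioi).2 (ae_of_all _ fun v hv => ?_)
    rw [Real.norm_eq_abs, abs_of_nonneg (truncRpow_nonneg _ (zero_le_one.trans hv.le))]
    exact min_le_right _ _
  have hunion : Ioc 0 1 ∪ Ioi 1 = Ioi (0 : ℝ) := Ioc_union_Ioi_eq_Ioi zero_le_one
  calc ∫ v in Ioc 0 T, truncRpow (b + 1) v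
      ≤ ∫ v in Ioi 0, truncRpow (b + 1) v := by
        refine setIntegral_mono_set (hunion ▸ hint₁.union hint₂) ?_
          (ae_of_all _ Ioc_subset_Ioi_self)
        exact (ae_restrict_iff' measurableSet_Ioi).2
          (ae_of_all _ fun v hv => truncRpow_nonneg _ (le_of_lt hv))
    _ = (∫ v in Ioc 0 1, truncRpow (b + 1) v) + ∫ v in Ioi 1, truncRpow (b + 1) v := by
        rw [← hunion, setIntegral_union Ioc_disjoint_Ioi_same measurableSet_Ioi hint₁ hint₂]
    _ ≤ 1 * volume.real (Ioc (0 : ℝ) 1) + ∫ v in Ioi 1, v ^ (-(b + 1)) := by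
        refine add_le_add (setIntegral_Ioc_le_of_le fun v hv =>
          ⟨truncRpow_nonneg _ hv.1.le, truncRpow_le_one _ _⟩) ?_
        exact setIntegral_mono_on hint₂ (integrableOn_Ioi_rpow_of_lt hexp zero_lt_one)
          measurableSet_Ioi fun v _ => min_le_right _ _
    _ = 1 + 1 / b := by
        rw [integral_Ioi_rpow_of_lt hexp zero_lt_one, Real.volume_real_Ioc]
        simp

lemma setIntegral_truncRpow_conv_lower_half_le {b K t : ℝ} (hb : 0 ≤ b) (ht : -K < t) :
    ∫ s in Ioc (-K) ((t - K) / 2), truncRpow (b + 1) (t - s) * truncRpow b (s + K)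
      ≤ truncRpow b ((t + K) / 2) := by
  have hhalf : 0 < (t + K) / 2 := by linarith
  calc ∫ s in Ioc (-K) ((t - K) / 2), truncRpow (b + 1) (t - s) * truncRpow b (s + K)
      ≤ truncRpow (b + 1) ((t + K) / 2) * volume.real (Ioc (-K) ((t - K) / 2)) :=
        setIntegral_Ioc_le_of_le fun s hs => by
          have h₁ : truncRpow (b + 1) (t - s) ≤ truncRpow (b + 1) ((t + K) / 2) :=
            truncRpow_le_truncRpow_of_le (by linarith) hhalf (by linarith [hs.2])
          have h₂ := truncRpow_nonneg b (neg_le_iff_add_nonneg.1 hs.1.le)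
          refine ⟨mul_nonneg (truncRpow_nonneg _ (by linarith [hs.2])) h₂, ?_⟩
          exact (mul_le_mul_of_nonneg_right h₁ h₂).trans
            (mul_le_of_le_one_right (truncRpow_nonneg _ hhalf.le) (truncRpow_le_one _ _))
    _ = (t + K) / 2 * truncRpow (b + 1) ((t + K) / 2) := by
        rw [Real.volume_real_Ioc_of_le (by linarith), mul_comm]
        ring_nf
    _ ≤ truncRpow b ((t + K) / 2) := mul_truncRpow_add_one_le hb hhalf

lemma setIntegral_truncRpow_conv_upper_half_le {b K t : ℝ} (hb : 0 < b) (ht : -K < t) :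
    ∫ s in Ioc ((t - K) / 2) t, truncRpow (b + 1) (t - s) * truncRpow b (s + K)
      ≤ (1 + 1 / b) * truncRpow b ((t + K) / 2) := by
  have hhalf : 0 < (t + K) / 2 := by linarith
  have hg := truncRpow_nonneg b hhalf.le
  calc ∫ s in Ioc ((t - K) / 2) t, truncRpow (b + 1) (t - s) * truncRpow b (s + K)
      ≤ ∫ s in Ioc ((t - K) / 2) t, truncRpow (b + 1) (t - s) * truncRpow b ((t + K) / 2) := by
        refine setIntegral_mono_on ((integrableOn_truncRpow_sub_mul _ _ t K).mono_set
          (Ioc_subset_Ioc_left (by linarith))) ?_ measurableSet_Ioc fun s hs => ?_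
        · refine integrableOn_Ioc_of_abs_le (M := 1) (by fun_prop) fun s hs => ?_
          rw [abs_of_nonneg (mul_nonneg (truncRpow_nonneg _ (sub_nonneg.2 hs.2)) hg)]
          exact mul_le_one₀ (truncRpow_le_one _ _) hg (truncRpow_le_one _ _)
        · exact mul_le_mul_of_nonneg_left
            (truncRpow_le_truncRpow_of_le hb.le hhalf (by linarith [hs.1]))
            (truncRpow_nonneg _ (by linarith [hs.2]))
    _ = (∫ v in Ioc 0 ((t + K) / 2), truncRpow (b + 1) v) * truncRpow b ((t + K) / 2) := by
        rw [integral_mul_const, ← intervalIntegral.integral_of_le (by linarith),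
          intervalIntegral.integral_comp_sub_left (truncRpow (b + 1)), sub_self,
          intervalIntegral.integral_of_le (by linarith)]
        ring_nf
    _ ≤ (1 + 1 / b) * truncRpow b ((t + K) / 2) :=
        mul_le_mul_of_nonneg_right (setIntegral_truncRpow_add_one_le hb _) hg

lemma setIntegral_truncRpow_conv_le {b K t : ℝ} (hb : 0 < b) (ht : -K < t) :
    ∫ s in Ioc (-K) t, truncRpow (b + 1) (t - s) * truncRpow b (s + K)
      ≤ 2 ^ b * (2 + 1 / b) * truncRpow b (t + K) := by
  have hf := integrableOn_truncRpow_sub_mul (b + 1) b t K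
  rw [← Ioc_union_Ioc_eq_Ioc (b := (t - K) / 2) (by linarith) (by linarith)] at hf ⊢
  rw [setIntegral_union (Ioc_disjoint_Ioc_of_le le_rfl) measurableSet_Ioc
    (hf.mono_set subset_union_left) (hf.mono_set subset_union_right)]
  calc _ ≤ truncRpow b ((t + K) / 2) + (1 + 1 / b) * truncRpow b ((t + K) / 2) :=
        add_le_add (setIntegral_truncRpow_conv_lower_half_le hb.le ht)
          (setIntegral_truncRpow_conv_upper_half_le hb ht)
    _ = (2 + 1 / b) * truncRpow b ((t + K) / 2) := by ring
    _ ≤ (2 + 1 / b) * (2 ^ b * truncRpow b (t + K)) :=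
        mul_le_mul_of_nonneg_left (truncRpow_half_le hb.le (by linarith)) (by positivity)
    _ = 2 ^ b * (2 + 1 / b) * truncRpow b (t + K) := by ring

section Iteration

variable {k g : ℝ → ℝ} {J : ℕ → ℝ → ℝ} {a C : ℝ}

lemma iterate_conv_nonneg (hk : ∀ x, 0 ≤ x → 0 ≤ k x) (hg : ∀ s, a < s → 0 ≤ g s)
    (hJ₀ : ∀ s, J 0 s = g s)
    (hJ : ∀ n t, a < t → J (n + 1) t = ∫ s in Ioc a t, k (t - s) * J n s) :
    ∀ n t, a < t → 0 ≤ J n t := by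
  intro n
  induction n with
  | zero => exact fun t ht => hJ₀ t ▸ hg t ht
  | succ n ih =>
    intro t ht
    rw [hJ n t ht]
    exact setIntegral_nonneg measurableSet_Ioc fun s hs =>
      mul_nonneg (hk _ (sub_nonneg.2 hs.2)) (ih s hs.1)

lemma iterate_conv_le_pow_mul (hC : 0 ≤ C) (hk : ∀ x, 0 ≤ x → 0 ≤ k x)
    (hg : ∀ s, a < s → 0 ≤ g s)
    (hint : ∀ t, a < t → IntegrableOn (fun s => k (t - s) * g s) (Ioc a t))
    (hconv : ∀ t, a < t → ∫ s in Ioc a t, k (t - s) * g s ≤ C * g t)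
    (hJ₀ : ∀ s, J 0 s = g s)
    (hJ : ∀ n t, a < t → J (n + 1) t = ∫ s in Ioc a t, k (t - s) * J n s) :
    ∀ n t, a < t → J n t ≤ C ^ n * g t := by
  intro n
  induction n with
  | zero => simp [hJ₀]
  | succ n ih =>
    intro t ht
    calc J (n + 1) t = ∫ s in Ioc a t, k (t - s) * J n s := hJ n t ht
      _ ≤ ∫ s in Ioc a t, C ^ n * (k (t - s) * g s) := by
        refine integral_mono_of_nonneg ?_ ((hint t ht).const_mul _) ?_
        · refine (ae_restrict_iff' measurableSet_Ioc).2 (ae_of_all _ fun s hs => ?_)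
          exact mul_nonneg (hk _ (sub_nonneg.2 hs.2))
            (iterate_conv_nonneg hk hg hJ₀ hJ n s hs.1)
        · refine (ae_restrict_iff' measurableSet_Ioc).2 (ae_of_all _ fun s hs => ?_)
          simp only [mul_left_comm (C ^ n)]
          exact mul_le_mul_of_nonneg_left (ih s hs.1) (hk _ (sub_nonneg.2 hs.2))
      _ = C ^ n * ∫ s in Ioc a t, k (t - s) * g s := integral_const_mul _ _
      _ ≤ C ^ n * (C * g t) := mul_le_mul_of_nonneg_left (hconv t ht) (pow_nonneg hC n)
      _ = C ^ (n + 1) * g t := by ring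

end Iteration

theorem stmt12 (d : ℕ) (hd : 3 ≤ d) :
    ∃ C > 0, ∀ K : ℝ, 0 ≤ K → ∀ J : ℕ → ℝ → ℝ,
      (∀ s : ℝ, J 0 s = min 1 ((s + K) ^ (-((d : ℝ) / 2 - 1)))) →
      (∀ n : ℕ, ∀ t : ℝ, -K < t →
        J (n + 1) t = ∫ s in Set.Ioc (-K) t,
          min 1 ((t - s) ^ (-(d : ℝ) / 2)) * J n s) →
      ∀ n : ℕ, ∀ t : ℝ, -K < t →
        J n t ≤ C ^ n * min 1 ((t + K) ^ (-((d : ℝ) / 2 - 1))) := by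
  set b : ℝ := (d : ℝ) / 2 - 1 with hb_def
  have hb : 0 < b := by
    have : (3 : ℝ) ≤ d := by exact_mod_cast hd
    linarith
  refine ⟨2 ^ b * (2 + 1 / b), by positivity, fun K _ J hJ₀ hJ => ?_⟩
  have hexp : -(d : ℝ) / 2 = -(b + 1) := by rw [hb_def]; ring
  simp only [hexp] at hJ
  exact iterate_conv_le_pow_mul (k := truncRpow (b + 1)) (g := fun s => truncRpow b (s + K))
    (by positivity) (fun x hx => truncRpow_nonneg _ hx)
    (fun s hs => truncRpow_nonneg _ (neg_lt_iff_pos_add.1 hs).le)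
    (fun t _ => integrableOn_truncRpow_sub_mul _ _ t K)
    (fun t ht => setIntegral_truncRpow_conv_le hb ht) hJ₀ hJ
end
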